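/- In the setting of the previous statement (fiber Schrödinger operators H_φ(θ) and H_0(θ), band edges λ_{φ,n}^±, λ_{0,n}^±, and Λ₁ = inf_θ (smallest eigenvalue of X(θ)), Λ_ν = sup_θ (largest eigenvalue of X(θ)) for X(θ) = Δ_{m,φ}(θ) − Δ_{m,0}(θ)), the band lengths |σ_{φ,n}| = λ_{φ,n}^+ − λ_{φ,n}^- and |σ_{0,n}| = λ_{0,n}^+ − λ_{0,n}^- satisfy, for every n ∈ {1,…,ν}: | |σ_{φ,n}| − |σ_{0,n}| | ≤ Λ_ν − Λ₁. (Paper: Theorem 2.6, inequality (emf2), at the level of fiber operators.) -/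

import Mathlib

/-!
For each `θ` the difference `X(θ) = H_φ(θ) - H_0(θ)` is Hermitian, so its quadratic form lies
between `Λ₁` and `Λ_ν` times the norm squared. Weyl's inequality, proved by the Courant–Fischer
dimension count, then gives `λ_{0,n}(θ) + Λ₁ ≤ λ_{φ,n}(θ) ≤ λ_{0,n}(θ) + Λ_ν` for every `θ`.
Passing to suprema and infima over `θ` shifts both band edges of `σ_{φ,n}` into the window
`[λ^±_{0,n} + Λ₁, λ^±_{0,n} + Λ_ν]`, and subtracting gives the bound on the band lengths. All
suprema and infima are finite because, by Gershgorin, every eigenvalue involved is bounded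
uniformly in `θ`.
-/

open scoped Classical
open Finset

noncomputable section

/-- The degree of a vertex: the number of oriented edges starting at it. -/
def mdeg {V E : Type} [Fintype E] (o : E → V) (v : V) : ℕ :=
  (Finset.univ.filter fun e => o e = v).card

/-- The combinatorial magnetic Laplacian `Δ_α`. -/
def magLap {V E : Type} [Fintype E] (o t : E → V) (α : E → ℝ)
    (f : V → ℂ) (v : V) : ℂ :=
  ∑ e ∈ Finset.univ.filter (fun e => o e = v),
    (f v - Complex.exp (Complex.I * (α e : ℂ)) * f (t e))

/-- The fiber magnetic Laplacian `Δ_{m,φ}(θ)`. -/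
def fiberLap {V E : Type} [Fintype E] {d : ℕ} (o t : E → V)
    (m : E → Fin d → ℝ) (φ : E → ℝ) (θ : Fin d → ℝ) (f : V → ℂ) (v : V) : ℂ :=
  (mdeg o v : ℂ) * f v -
    ∑ e ∈ Finset.univ.filter (fun e => o e = v),
      Complex.exp (Complex.I * ((φ e + ∑ i, m e i * θ i : ℝ) : ℂ)) * f (t e)

/-- Standard inner product on `ℂ^V` (conjugate-linear in the first argument). -/
def dotC {V : Type} [Fintype V] (f g : V → ℂ) : ℂ :=
  ∑ v, (starRingEnd ℂ) (f v) * g v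

/-- `lam` lists the eigenvalues of the operator `T` on `ℂ^V` in nondecreasing
order, counted with multiplicity (witnessed by an orthonormal eigenbasis). -/
def IsEigList {V : Type} [Fintype V] (T : (V → ℂ) → (V → ℂ))
    (lam : Fin (Fintype.card V) → ℝ) : Prop :=
  Monotone lam ∧ ∃ u : Fin (Fintype.card V) → (V → ℂ),
    (∀ i j, dotC (u i) (u j) = if i = j then (1 : ℂ) else 0) ∧
    ∀ i, T (u i) = fun v => ((lam i : ℝ) : ℂ) * u i v

/-- A closed walk in the multigraph. -/
def IsClosedWalk {V E : Type} (o t : E → V) {k : ℕ} (c : Fin (k + 1) → E) : Prop :=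
  (∀ i : Fin k, t (c i.castSucc) = o (c i.succ)) ∧ t (c (Fin.last k)) = o (c 0)

/-- Two forms have the same flux along every closed walk. -/
def SameFlux {V E W : Type} [AddCommMonoid W] (o t : E → V) (b b' : E → W) : Prop :=
  ∀ (k : ℕ) (c : Fin (k + 1) → E), IsClosedWalk o t c →
    ∑ i, b (c i) = ∑ i, b' (c i)

/-- Connectivity of the multigraph: any two distinct vertices are the endpoints
of some walk. -/
def MGConnected {V E : Type} (o t : E → V) : Prop :=
  ∀ u v : V, u ≠ v → ∃ (k : ℕ) (c : Fin (k + 1) → E),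
    (∀ i : Fin k, t (c i.castSucc) = o (c i.succ)) ∧ o (c 0) = u ∧ t (c (Fin.last k)) = v

/-- The set of fluxes of a form along all closed walks. -/
def fluxSet {V E W : Type} [AddCommMonoid W] (o t : E → V) (b : E → W) : Set W :=
  {w | ∃ (k : ℕ) (c : Fin (k + 1) → E), IsClosedWalk o t c ∧ ∑ i, b (c i) = w}

/-- The number of oriented edges in the support of a form. -/
def suppCard {E : Type} [Fintype E] {W : Type} [Zero W] (b : E → W) : ℕ :=
  (Finset.univ.filter fun e => b e ≠ 0).card

/-- The integer lattice `ℤ^d` inside `ℝ^d`. -/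
def intLattice (d : ℕ) : Set (Fin d → ℝ) :=
  {w | ∀ i, ∃ z : ℤ, w i = (z : ℝ)}


section Spectral

open Module

variable {𝕜 E : Type*} [RCLike 𝕜] [NormedAddCommGroup E] [InnerProductSpace 𝕜 E]

local notation "⟪" x ", " y "⟫" => inner 𝕜 x y

theorem Orthonormal.re_inner_sum_smul {ι : Type*} {v : ι → E} (hv : Orthonormal 𝕜 v)
    (s : Finset ι) (a : ι → ℝ) (c : ι → 𝕜) :
    RCLike.re ⟪∑ i ∈ s, c i • v i, ∑ i ∈ s, ((a i : 𝕜) * c i) • v i⟫ =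
      ∑ i ∈ s, a i * ‖c i‖ ^ 2 := by
  rw [hv.inner_sum, map_sum]
  refine Finset.sum_congr rfl fun i _ => ?_
  rw [mul_left_comm, RCLike.conj_mul]
  norm_cast

section Eigenbasis

variable {ι : Type*} [Fintype ι] {v : ι → E} {T : E →ₗ[𝕜] E} {a : ι → ℝ} {x : E}

theorem Orthonormal.exists_re_inner_apply_eq_sum (hv : Orthonormal 𝕜 v)
    (hT : ∀ i, T (v i) = (a i : 𝕜) • v i) (hx : x ∈ Submodule.span 𝕜 (Set.range v)) :
    ∃ c : ι → 𝕜, RCLike.re ⟪x, T x⟫ = ∑ i, a i * ‖c i‖ ^ 2 ∧ ‖x‖ ^ 2 = ∑ i, ‖c i‖ ^ 2 := by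
  obtain ⟨c, rfl⟩ := (Submodule.mem_span_range_iff_exists_fun 𝕜).mp hx
  have hTx : T (∑ i, c i • v i) = ∑ i, ((a i : 𝕜) * c i) • v i := by
    simp only [map_sum, map_smul, hT, smul_smul, mul_comm]
  refine ⟨c, by rw [hTx, hv.re_inner_sum_smul], ?_⟩
  simpa using hv.re_inner_sum_smul Finset.univ 1 c

theorem Orthonormal.mul_norm_sq_le_re_inner_apply (hv : Orthonormal 𝕜 v)
    (hT : ∀ i, T (v i) = (a i : 𝕜) • v i) (hx : x ∈ Submodule.span 𝕜 (Set.range v))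
    {μ : ℝ} (hμ : ∀ i, μ ≤ a i) : μ * ‖x‖ ^ 2 ≤ RCLike.re ⟪x, T x⟫ := by
  obtain ⟨c, hTx, hx⟩ := hv.exists_re_inner_apply_eq_sum hT hx
  rw [hTx, hx, Finset.mul_sum]
  gcongr with i
  exact hμ i

theorem Orthonormal.re_inner_apply_le_mul_norm_sq (hv : Orthonormal 𝕜 v)
    (hT : ∀ i, T (v i) = (a i : 𝕜) • v i) (hx : x ∈ Submodule.span 𝕜 (Set.range v))
    {μ : ℝ} (hμ : ∀ i, a i ≤ μ) : RCLike.re ⟪x, T x⟫ ≤ μ * ‖x‖ ^ 2 := by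
  obtain ⟨c, hTx, hx⟩ := hv.exists_re_inner_apply_eq_sum hT hx
  rw [hTx, hx, Finset.mul_sum]
  gcongr with i
  exact hμ i

end Eigenbasis

namespace LinearMap.IsSymmetric

variable [FiniteDimensional 𝕜 E] [Nontrivial E] {T : E →ₗ[𝕜] E}

theorem exists_hasEigenvalue_forall_re_inner_le (hT : T.IsSymmetric) :
    ∃ μ : ℝ, End.HasEigenvalue T μ ∧ ∀ x, RCLike.re ⟪x, T x⟫ ≤ μ * ‖x‖ ^ 2 := by
  have : Nonempty (Fin (finrank 𝕜 E)) := ⟨⟨0, finrank_pos⟩⟩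
  obtain ⟨i, hi⟩ := Finite.exists_max (hT.eigenvalues rfl)
  refine ⟨_, hT.hasEigenvalue_eigenvalues rfl i, fun x => ?_⟩
  refine (hT.eigenvectorBasis rfl).orthonormal.re_inner_apply_le_mul_norm_sq
    (hT.apply_eigenvectorBasis rfl) ?_ hi
  simpa using (hT.eigenvectorBasis rfl).toBasis.mem_span x

theorem exists_hasEigenvalue_forall_le_re_inner (hT : T.IsSymmetric) :
    ∃ μ : ℝ, End.HasEigenvalue T μ ∧ ∀ x, μ * ‖x‖ ^ 2 ≤ RCLike.re ⟪x, T x⟫ := by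
  have : Nonempty (Fin (finrank 𝕜 E)) := ⟨⟨0, finrank_pos⟩⟩
  obtain ⟨i, hi⟩ := Finite.exists_min (hT.eigenvalues rfl)
  refine ⟨_, hT.hasEigenvalue_eigenvalues rfl i, fun x => ?_⟩
  refine (hT.eigenvectorBasis rfl).orthonormal.mul_norm_sq_le_re_inner_apply
    (hT.apply_eigenvectorBasis rfl) ?_ hi
  simpa using (hT.eigenvectorBasis rfl).toBasis.mem_span x

end LinearMap.IsSymmetric

/-- Weyl's inequality, by the Courant–Fischer dimension count: the eigenvectors of `T` from index
`n` on and those of `S` up to index `n` span subspaces of dimensions adding up to `N + 1`, so these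
share a nonzero vector. -/
theorem eigenvalue_le_add_of_re_inner_sub_le {N : ℕ} (hN : finrank 𝕜 E = N)
    {T S : E →ₗ[𝕜] E} {u w : Fin N → E} {a b : Fin N → ℝ}
    (hu : Orthonormal 𝕜 u) (hw : Orthonormal 𝕜 w) (ha : Monotone a) (hb : Monotone b)
    (hTu : ∀ i, T (u i) = (a i : 𝕜) • u i) (hSw : ∀ i, S (w i) = (b i : 𝕜) • w i)
    {C : ℝ} (hC : ∀ x, RCLike.re ⟪x, (T - S) x⟫ ≤ C * ‖x‖ ^ 2) (n : Fin N) :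
    a n ≤ b n + C := by
  have : FiniteDimensional 𝕜 E := Module.finite_of_finrank_pos (hN ▸ n.pos)
  have hu' := hu.comp _ (Subtype.val_injective (p := (n ≤ ·)))
  have hw' := hw.comp _ (Subtype.val_injective (p := (· ≤ n)))
  set U := Submodule.span 𝕜 (Set.range (u ∘ Subtype.val (p := (n ≤ ·))))
  set W := Submodule.span 𝕜 (Set.range (w ∘ Subtype.val (p := (· ≤ n))))
  have hU : finrank 𝕜 U = N - n := by
    rw [finrank_span_eq_card hu'.linearIndependent, Fintype.card_subtype,
      Finset.filter_le_eq_Ici, Fin.card_Ici]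
  have hW : finrank 𝕜 W = n + 1 := by
    rw [finrank_span_eq_card hw'.linearIndependent, Fintype.card_subtype,
      Finset.filter_ge_eq_Iic, Fin.card_Iic]
  obtain ⟨x, hxU, hxW, hx⟩ : ∃ x ∈ U, x ∈ W ∧ x ≠ 0 := by
    by_contra! h
    have := Submodule.finrank_add_finrank_le_of_disjoint (Submodule.disjoint_def.mpr h)
    omega
  have hT : a n * ‖x‖ ^ 2 ≤ RCLike.re ⟪x, T x⟫ :=
    hu'.mul_norm_sq_le_re_inner_apply (fun i => hTu i) hxU fun i => ha i.2
  have hS : RCLike.re ⟪x, S x⟫ ≤ b n * ‖x‖ ^ 2 :=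
    hw'.re_inner_apply_le_mul_norm_sq (fun i => hSw i) hxW fun i => hb i.2
  have hTS := hC x
  rw [LinearMap.sub_apply, inner_sub_right, map_sub] at hTS
  have hx2 : 0 < ‖x‖ ^ 2 := by positivity
  exact le_of_mul_le_mul_right (by linarith) hx2

end Spectral

section Width

open Set Bornology

theorem abs_sub_width_sub_width_le {ι : Type*} [Nonempty ι] {f g : ι → ℝ}
    (hf : IsBounded (range f)) (hg : IsBounded (range g)) {A B : ℝ}
    (h : ∀ i, f i - g i ∈ Icc A B) :
    |(sSup (range f) - sInf (range f)) - (sSup (range g) - sInf (range g))| ≤ B - A := by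
  have hA (i : ι) : g i + A ≤ f i := le_sub_iff_add_le'.1 (h i).1
  have hB (i : ι) : f i ≤ g i + B := sub_le_iff_le_add'.1 (h i).2
  have hsup_f : sSup (range f) ≤ sSup (range g) + B :=
    csSup_le (range_nonempty f) <| forall_mem_range.2 fun i =>
      (hB i).trans (add_le_add_left (le_csSup hg.bddAbove (mem_range_self i)) B)
  have hsup_g : sSup (range g) ≤ sSup (range f) - A :=
    csSup_le (range_nonempty g) <| forall_mem_range.2 fun i =>
      le_sub_iff_add_le.2 ((hA i).trans (le_csSup hf.bddAbove (mem_range_self i)))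
  have hinf_f : sInf (range g) + A ≤ sInf (range f) :=
    le_csInf (range_nonempty f) <| forall_mem_range.2 fun i =>
      (add_le_add_left (csInf_le hg.bddBelow (mem_range_self i)) A).trans (hA i)
  have hinf_g : sInf (range f) - B ≤ sInf (range g) :=
    le_csInf (range_nonempty g) <| forall_mem_range.2 fun i =>
      sub_le_iff_le_add.2 ((csInf_le hf.bddBelow (mem_range_self i)).trans (hB i))
  rw [abs_le]
  constructor <;> linarith

end Width

section Hopping

variable {V E : Type} [Fintype E]

def hop (o t : E → V) (c : E → ℂ) (f : V → ℂ) (v : V) : ℂ :=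
  ∑ e ∈ univ.filter (fun e => o e = v), c e * f (t e)

theorem hop_sub (o t : E → V) (c c' : E → ℂ) (f : V → ℂ) (v : V) :
    hop o t (c - c') f v = hop o t c f v - hop o t c' f v := by
  simp only [hop, Pi.sub_apply, sub_mul, Finset.sum_sub_distrib]

variable [Fintype V]

theorem sum_mul_hop (o t : E → V) (c : E → ℂ) (f g : V → ℂ) :
    ∑ v, g v * hop o t c f v = ∑ e, g (o e) * c e * f (t e) := by
  simp only [hop, Finset.mul_sum]
  rw [← Finset.sum_fiberwise univ o]
  refine Finset.sum_congr rfl fun v _ => Finset.sum_congr rfl fun e he => ?_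
  rw [(Finset.mem_filter.1 he).2, mul_assoc]

theorem dotC_hop_comm {o t : E → V} {inv : E → E} (hinv : ∀ e, inv (inv e) = e)
    (hoi : ∀ e, o (inv e) = t e) (hti : ∀ e, t (inv e) = o e) {c : E → ℂ}
    (hc : ∀ e, c (inv e) = starRingEnd ℂ (c e)) (f g : V → ℂ) :
    dotC (hop o t c f) g = dotC f (hop o t c g) := by
  have hconj (v : V) : starRingEnd ℂ (hop o t c f v) =
      hop o t (fun e => starRingEnd ℂ (c e)) (fun v => starRingEnd ℂ (f v)) v := by
    simp [hop]
  simp only [dotC, hconj, mul_comm _ (g _), sum_mul_hop]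
  rw [← (Function.Involutive.bijective hinv).sum_comp]
  refine Finset.sum_congr rfl fun e _ => ?_
  rw [hoi, hti, hc, Complex.conj_conj]
  ring

/-- Gershgorin's bound, read off at a vertex where `‖g‖` is maximal. -/
theorem exists_abs_sub_le_of_hop_eigen {o t : E → V} {c : E → ℂ} {K : ℝ}
    (hc : ∀ e, ‖c e‖ ≤ K) {A : V → ℝ} {μ : ℝ} {g : V → ℂ} (hg : g ≠ 0)
    (h : ∀ v, (μ : ℂ) * g v = A v * g v - hop o t c g v) :
    ∃ v, |μ - A v| ≤ Fintype.card E * K := by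
  obtain ⟨w, hw⟩ := Function.ne_iff.1 hg
  obtain ⟨v, -, hmax⟩ := Finset.exists_max_image univ (fun v => ‖g v‖) ⟨w, mem_univ w⟩
  have hgv : 0 < ‖g v‖ := (norm_pos_iff.2 hw).trans_le (hmax w (mem_univ w))
  have hrow : ∑ e ∈ univ.filter (fun e => o e = v), ‖c e‖ ≤ Fintype.card E * K := by
    refine (Finset.sum_le_sum_of_subset_of_nonneg (filter_subset _ _)
      fun _ _ _ => norm_nonneg _).trans ?_
    simpa using Finset.sum_le_card_nsmul univ _ K fun e _ => hc e
  have hhop : ‖hop o t c g v‖ ≤ Fintype.card E * K * ‖g v‖ :=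
    calc ‖hop o t c g v‖ ≤ ∑ e ∈ univ.filter (fun e => o e = v), ‖c e‖ * ‖g v‖ :=
          (norm_sum_le _ _).trans <| Finset.sum_le_sum fun e _ => by
            rw [norm_mul]; gcongr; exact hmax _ (mem_univ _)
      _ ≤ Fintype.card E * K * ‖g v‖ := by rw [← Finset.sum_mul]; gcongr
  refine ⟨v, le_of_mul_le_mul_right ?_ hgv⟩
  have hv : ((μ - A v : ℝ) : ℂ) * g v = -hop o t c g v := by
    push_cast; linear_combination h v
  calc |μ - A v| * ‖g v‖ = ‖hop o t c g v‖ := by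
        rw [← norm_neg (hop _ _ _ _ _), ← hv, norm_mul, Complex.norm_real, Real.norm_eq_abs]
    _ ≤ Fintype.card E * K * ‖g v‖ := hhop

end Hopping

section Fiber

variable {V E : Type} {d : ℕ}

theorem inner_eq_dotC [Fintype V] (x y : EuclideanSpace ℂ V) :
    inner ℂ x y = dotC x.ofLp y.ofLp := by
  simp only [PiLp.inner_apply, RCLike.inner_apply, dotC, mul_comm]

theorem IsEigList.exists_orthonormal [Fintype V]
    {T : EuclideanSpace ℂ V →ₗ[ℂ] EuclideanSpace ℂ V} {lam : Fin (Fintype.card V) → ℝ}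
    (h : IsEigList (fun f => (T (WithLp.toLp 2 f)).ofLp) lam) :
    ∃ u : Fin (Fintype.card V) → EuclideanSpace ℂ V,
      Orthonormal ℂ u ∧ ∀ i, T (u i) = (lam i : ℂ) • u i := by
  obtain ⟨-, u, hu, hTu⟩ := h
  refine ⟨fun i => WithLp.toLp 2 (u i), orthonormal_iff_ite.2 fun i j => ?_, fun i => ?_⟩
  · simpa [inner_eq_dotC] using hu i j
  · ext v
    simpa using congrFun (hTu i) v

def fiberPhase (m : E → Fin d → ℝ) (φ : E → ℝ) (θ : Fin d → ℝ) (e : E) : ℂ :=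
  Complex.exp (Complex.I * ((φ e + ∑ i, m e i * θ i : ℝ) : ℂ))

theorem norm_fiberPhase (m : E → Fin d → ℝ) (φ : E → ℝ) (θ : Fin d → ℝ) (e : E) :
    ‖fiberPhase m φ θ e‖ = 1 := by
  rw [fiberPhase, mul_comm, Complex.norm_exp_ofReal_mul_I]

theorem fiberPhase_inv {inv : E → E} {m : E → Fin d → ℝ} (hm : ∀ e, m (inv e) = -m e)
    {φ : E → ℝ} (hφ : ∀ e, φ (inv e) = -φ e) (θ : Fin d → ℝ) (e : E) :
    fiberPhase m φ θ (inv e) = starRingEnd ℂ (fiberPhase m φ θ e) := by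
  rw [fiberPhase, fiberPhase, ← Complex.exp_conj]
  simp only [hm, hφ, Pi.neg_apply, neg_mul, Finset.sum_neg_distrib, map_mul, Complex.conj_I,
    Complex.conj_ofReal]
  push_cast
  ring_nf

variable [Fintype E]

theorem fiberLap_eq_sub_hop (o t : E → V) (m : E → Fin d → ℝ) (φ : E → ℝ) (θ : Fin d → ℝ)
    (f : V → ℂ) (v : V) :
    fiberLap o t m φ θ f v = mdeg o v * f v - hop o t (fiberPhase m φ θ) f v :=
  rfl

theorem fiberLap_sub_fiberLap_zero (o t : E → V) (m : E → Fin d → ℝ) (φ : E → ℝ)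
    (θ : Fin d → ℝ) (f : V → ℂ) (v : V) :
    fiberLap o t m φ θ f v - fiberLap o t m (fun _ => 0) θ f v =
      hop o t (fiberPhase m (fun _ => 0) θ - fiberPhase m φ θ) f v := by
  rw [fiberLap_eq_sub_hop, fiberLap_eq_sub_hop, hop_sub]
  ring

def fiberSchrodinger (o t : E → V) (m : E → Fin d → ℝ) (φ : E → ℝ) (θ : Fin d → ℝ)
    (Q : V → ℝ) : EuclideanSpace ℂ V →ₗ[ℂ] EuclideanSpace ℂ V where
  toFun f := WithLp.toLp 2 fun v => fiberLap o t m φ θ f.ofLp v + (Q v : ℂ) * f v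
  map_add' f g := by
    ext v
    simp only [fiberLap_eq_sub_hop, hop, WithLp.ofLp_add, PiLp.add_apply, Pi.add_apply, mul_add,
      Finset.sum_add_distrib]
    ring
  map_smul' c f := by
    ext v
    simp only [fiberLap_eq_sub_hop, hop, WithLp.ofLp_smul, PiLp.smul_apply, Pi.smul_apply,
      smul_eq_mul, RingHom.id_apply, mul_left_comm _ c, ← Finset.mul_sum]
    ring

variable {o t : E → V} {m : E → Fin d → ℝ} {φ : E → ℝ} {θ : Fin d → ℝ} {Q : V → ℝ}

theorem fiberSchrodinger_sub_apply (x : EuclideanSpace ℂ V) :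
    (fiberSchrodinger o t m φ θ Q - fiberSchrodinger o t m (fun _ => 0) θ Q) x =
      WithLp.toLp 2 (hop o t (fiberPhase m (fun _ => 0) θ - fiberPhase m φ θ) x.ofLp) := by
  ext v
  simp only [fiberSchrodinger, LinearMap.sub_apply, LinearMap.coe_mk, AddHom.coe_mk,
    WithLp.ofLp_sub, Pi.sub_apply, ← fiberLap_sub_fiberLap_zero]
  ring

variable [Fintype V]

theorem isSymmetric_fiberSchrodinger_sub {inv : E → E} (hinv : ∀ e, inv (inv e) = e)
    (hoi : ∀ e, o (inv e) = t e) (hti : ∀ e, t (inv e) = o e) (hm : ∀ e, m (inv e) = -m e)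
    (hφ : ∀ e, φ (inv e) = -φ e) :
    (fiberSchrodinger o t m φ θ Q - fiberSchrodinger o t m (fun _ => 0) θ Q).IsSymmetric := by
  intro x y
  simp only [inner_eq_dotC, fiberSchrodinger_sub_apply]
  refine dotC_hop_comm hinv hoi hti (fun e => ?_) _ _
  simp only [Pi.sub_apply, map_sub, fiberPhase_inv hm hφ,
    fiberPhase_inv hm (φ := fun _ => 0) fun _ => neg_zero.symm]

end Fiber

section Bands

open Set Bornology

variable {V E : Type} [Fintype E] {d : ℕ}
  {o t : E → V} {m : E → Fin d → ℝ} {φ : E → ℝ} {Q : V → ℝ}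

/-- The union over `θ` of the spectra of `X(θ) = Δ_{m,φ}(θ) - Δ_{m,0}(θ)`. -/
def fiberDifferenceSpectrum (o t : E → V) (m : E → Fin d → ℝ) (φ : E → ℝ) : Set ℝ :=
  {μ | ∃ (θ : Fin d → ℝ) (f : V → ℂ), f ≠ 0 ∧
    ∀ v, fiberLap o t m φ θ f v - fiberLap o t m (fun _ => 0) θ f v = (μ : ℂ) * f v}

theorem mem_fiberDifferenceSpectrum {θ : Fin d → ℝ} {μ : ℝ} (h : Module.End.HasEigenvalue
    (fiberSchrodinger o t m φ θ Q - fiberSchrodinger o t m (fun _ => 0) θ Q) μ) :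
    μ ∈ fiberDifferenceSpectrum o t m φ := by
  obtain ⟨x, hx⟩ := h.exists_hasEigenvector
  refine ⟨θ, x.ofLp, (WithLp.ofLp_eq_zero 2).ne.2 hx.2, fun v => ?_⟩
  have := congrFun (congrArg WithLp.ofLp (Module.End.mem_eigenspace_iff.1 hx.1)) v
  rw [fiberSchrodinger_sub_apply] at this
  simpa [fiberLap_sub_fiberLap_zero] using this

variable [Fintype V]

theorem isBounded_fiberDifferenceSpectrum : IsBounded (fiberDifferenceSpectrum o t m φ) := by
  refine isBounded_iff_forall_norm_le.2 ⟨Fintype.card E * 2, ?_⟩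
  rintro μ ⟨θ, f, hf, h⟩
  have hc (e : E) : ‖fiberPhase m φ θ e - fiberPhase m (fun _ => 0) θ e‖ ≤ 2 := by
    refine (norm_sub_le _ _).trans ?_
    rw [norm_fiberPhase, norm_fiberPhase]
    norm_num
  obtain ⟨v, hv⟩ := exists_abs_sub_le_of_hop_eigen (o := o) (t := t) hc (A := fun _ => 0) hf
    fun v => by
      rw [← Pi.sub_def, hop_sub, ← h v, fiberLap_eq_sub_hop, fiberLap_eq_sub_hop]
      push_cast
      ring
  simpa using hv

theorem abs_le_of_fiberSchrodinger_eigen {θ : Fin d → ℝ} {μ : ℝ} {x : EuclideanSpace ℂ V}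
    (hx : x ≠ 0) (h : fiberSchrodinger o t m φ θ Q x = (μ : ℂ) • x) :
    |μ| ≤ 2 * Fintype.card E + ∑ w, |Q w| := by
  have heigen (v : V) : (μ : ℂ) * x v = ((mdeg o v + Q v : ℝ) : ℂ) * x v -
      hop o t (fiberPhase m φ θ) x.ofLp v := by
    have := congrFun (congrArg WithLp.ofLp h) v
    simp only [fiberSchrodinger, LinearMap.coe_mk, AddHom.coe_mk, fiberLap_eq_sub_hop,
      WithLp.ofLp_smul, Pi.smul_apply, smul_eq_mul] at this
    push_cast
    linear_combination -this
  obtain ⟨v, hv⟩ := exists_abs_sub_le_of_hop_eigen (fun e => (norm_fiberPhase m φ θ e).le)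
    ((WithLp.ofLp_eq_zero 2).ne.2 hx) heigen
  have hdeg : (mdeg o v : ℝ) ≤ Fintype.card E := by
    exact_mod_cast (card_filter_le _ _).trans_eq card_univ
  have hQ : |Q v| ≤ ∑ w, |Q w| := single_le_sum (fun w _ => abs_nonneg (Q w)) (mem_univ v)
  have hμ := abs_sub_abs_le_abs_sub μ (mdeg o v + Q v)
  have hA := abs_add_le (mdeg o v : ℝ) (Q v)
  rw [Nat.abs_cast] at hA
  linarith

theorem isBounded_range_of_isEigList {lam : (Fin d → ℝ) → Fin (Fintype.card V) → ℝ}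
    (hlam : ∀ θ, IsEigList (fun f v => fiberLap o t m φ θ f v + (Q v : ℂ) * f v) (lam θ))
    (k : Fin (Fintype.card V)) : IsBounded (range fun θ => lam θ k) := by
  refine isBounded_iff_forall_norm_le.2
    ⟨2 * Fintype.card E + ∑ w, |Q w|, forall_mem_range.2 fun θ => ?_⟩
  obtain ⟨u, hu, hTu⟩ := IsEigList.exists_orthonormal (T := fiberSchrodinger o t m φ θ Q) (hlam θ)
  exact abs_le_of_fiberSchrodinger_eigen (hu.ne_zero k) (hTu k)

theorem fiberEigenvalue_sub_mem_Icc {inv : E → E} (hinv : ∀ e, inv (inv e) = e)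
    (hoi : ∀ e, o (inv e) = t e) (hti : ∀ e, t (inv e) = o e) (hm : ∀ e, m (inv e) = -m e)
    (hφ : ∀ e, φ (inv e) = -φ e) {θ : Fin d → ℝ} {lamφ lam0 : Fin (Fintype.card V) → ℝ}
    (hlamφ : IsEigList (fun f v => fiberLap o t m φ θ f v + (Q v : ℂ) * f v) lamφ)
    (hlam0 : IsEigList (fun f v => fiberLap o t m (fun _ => 0) θ f v + (Q v : ℂ) * f v) lam0)
    (n : Fin (Fintype.card V)) :
    lamφ n - lam0 n ∈
      Icc (sInf (fiberDifferenceSpectrum o t m φ)) (sSup (fiberDifferenceSpectrum o t m φ)) := by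
  have : Nonempty V := Fintype.card_pos_iff.1 n.pos
  obtain ⟨u, hu, hTu⟩ := IsEigList.exists_orthonormal (T := fiberSchrodinger o t m φ θ Q) hlamφ
  obtain ⟨w, hw, hSw⟩ :=
    IsEigList.exists_orthonormal (T := fiberSchrodinger o t m (fun _ => 0) θ Q) hlam0
  have hX := isSymmetric_fiberSchrodinger_sub (Q := Q) (θ := θ) hinv hoi hti hm hφ
  obtain ⟨μmin, hμmin, hmin⟩ := hX.exists_hasEigenvalue_forall_le_re_inner
  obtain ⟨μmax, hμmax, hmax⟩ := hX.exists_hasEigenvalue_forall_re_inner_le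
  have hbdd := isBounded_fiberDifferenceSpectrum (o := o) (t := t) (m := m) (φ := φ)
  have hμmin' := csInf_le hbdd.bddBelow (mem_fiberDifferenceSpectrum (μ := μmin) hμmin)
  have hμmax' := le_csSup hbdd.bddAbove (mem_fiberDifferenceSpectrum (μ := μmax) hμmax)
  set T := fiberSchrodinger o t m φ θ Q
  set S := fiberSchrodinger o t m (fun _ => 0) θ Q
  have hST (x : EuclideanSpace ℂ V) : RCLike.re (inner ℂ x ((S - T) x)) ≤
      -sInf (fiberDifferenceSpectrum o t m φ) * ‖x‖ ^ 2 := by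
    rw [← neg_sub T S, LinearMap.neg_apply, inner_neg_right, map_neg]
    nlinarith [hmin x, mul_le_mul_of_nonneg_right hμmin' (sq_nonneg ‖x‖)]
  have hTS (x : EuclideanSpace ℂ V) : RCLike.re (inner ℂ x ((T - S) x)) ≤
      sSup (fiberDifferenceSpectrum o t m φ) * ‖x‖ ^ 2 :=
    (hmax x).trans (mul_le_mul_of_nonneg_right hμmax' (sq_nonneg ‖x‖))
  have hN : Module.finrank ℂ (EuclideanSpace ℂ V) = Fintype.card V := finrank_euclideanSpace
  constructor
  · linarith [eigenvalue_le_add_of_re_inner_sub_le hN hw hu hlam0.1 hlamφ.1 hSw hTu hST n]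
  · linarith [eigenvalue_le_add_of_re_inner_sub_le hN hu hw hlamφ.1 hlam0.1 hTu hSw hTS n]

end Bands

theorem fiber_band_length_variation_general
    {V E : Type} [Fintype V] [Fintype E] {d : ℕ}
    (o t : E → V) (inv : E → E)
    (hinv : ∀ e, inv (inv e) = e)
    (hoi : ∀ e, o (inv e) = t e) (hti : ∀ e, t (inv e) = o e)
    (m : E → Fin d → ℝ) (hm : ∀ e, m (inv e) = - m e)
    (φ : E → ℝ) (hφ : ∀ e, φ (inv e) = - φ e)
    (Q : V → ℝ)
    (lamφ lam0 : (Fin d → ℝ) → Fin (Fintype.card V) → ℝ)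
    (hlamφ : ∀ θ, IsEigList
      (fun f v => fiberLap o t m φ θ f v + (Q v : ℂ) * f v) (lamφ θ))
    (hlam0 : ∀ θ, IsEigList
      (fun f v => fiberLap o t m (fun _ => 0) θ f v + (Q v : ℂ) * f v) (lam0 θ))
    (Λ₁ Λν : ℝ)
    (hΛ₁ : Λ₁ = sInf {μ : ℝ | ∃ (θ : Fin d → ℝ) (f : V → ℂ), f ≠ 0 ∧
      ∀ v, fiberLap o t m φ θ f v - fiberLap o t m (fun _ => 0) θ f v = (μ : ℂ) * f v})
    (hΛν : Λν = sSup {μ : ℝ | ∃ (θ : Fin d → ℝ) (f : V → ℂ), f ≠ 0 ∧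
      ∀ v, fiberLap o t m φ θ f v - fiberLap o t m (fun _ => 0) θ f v = (μ : ℂ) * f v}) :
    ∀ n : Fin (Fintype.card V),
      |(sSup (Set.range fun θ => lamφ θ n) - sInf (Set.range fun θ => lamφ θ n)) -
        (sSup (Set.range fun θ => lam0 θ n) - sInf (Set.range fun θ => lam0 θ n))|
      ≤ Λν - Λ₁ := by
  intro n
  subst hΛ₁ hΛν
  exact abs_sub_width_sub_width_le (isBounded_range_of_isEigList hlamφ n)
    (isBounded_range_of_isEigList hlam0 n)
    fun θ => fiberEigenvalue_sub_mem_Icc hinv hoi hti hm hφ (hlamφ θ) (hlam0 θ) n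

/-- Variation of the band lengths under a perturbation by a magnetic field:
`||σ_{φ,n}| − |σ_{0,n}|| ≤ Λ_ν − Λ₁`, where `Λ₁` (resp. `Λ_ν`) is the infimum
of the smallest (resp. supremum of the largest) eigenvalue of
`X(θ) = Δ_{m,φ}(θ) − Δ_{m,0}(θ)` over `θ`. -/
theorem fiber_band_length_variation
    {V E : Type} [Fintype V] [Fintype E] [Nonempty V] {d : ℕ}
    (o t : E → V) (inv : E → E)
    (hfp : ∀ e, inv e ≠ e) (hinv : ∀ e, inv (inv e) = e)
    (hoi : ∀ e, o (inv e) = t e) (hti : ∀ e, t (inv e) = o e)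
    (m : E → Fin d → ℝ) (hm : ∀ e, m (inv e) = - m e)
    (φ : E → ℝ) (hφ : ∀ e, φ (inv e) = - φ e)
    (Q : V → ℝ)
    (lamφ lam0 : (Fin d → ℝ) → Fin (Fintype.card V) → ℝ)
    (hlamφ : ∀ θ, IsEigList
      (fun f v => fiberLap o t m φ θ f v + (Q v : ℂ) * f v) (lamφ θ))
    (hlam0 : ∀ θ, IsEigList
      (fun f v => fiberLap o t m (fun _ => 0) θ f v + (Q v : ℂ) * f v) (lam0 θ))
    (Λ₁ Λν : ℝ)
    (hΛ₁ : Λ₁ = sInf {μ : ℝ | ∃ (θ : Fin d → ℝ) (f : V → ℂ), f ≠ 0 ∧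
      ∀ v, fiberLap o t m φ θ f v - fiberLap o t m (fun _ => 0) θ f v = (μ : ℂ) * f v})
    (hΛν : Λν = sSup {μ : ℝ | ∃ (θ : Fin d → ℝ) (f : V → ℂ), f ≠ 0 ∧
      ∀ v, fiberLap o t m φ θ f v - fiberLap o t m (fun _ => 0) θ f v = (μ : ℂ) * f v}) :
    ∀ n : Fin (Fintype.card V),
      |(sSup (Set.range fun θ => lamφ θ n) - sInf (Set.range fun θ => lamφ θ n)) -
        (sSup (Set.range fun θ => lam0 θ n) - sInf (Set.range fun θ => lam0 θ n))|
      ≤ Λν - Λ₁ :=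
  fiber_band_length_variation_general o t inv hinv hoi hti m hm φ hφ Q lamφ lam0 hlamφ hlam0 Λ₁ Λν
    hΛ₁ hΛν
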